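/- arXiv:2009.08830 — 9 statements merged into one kernel-verified Lean document; each statement's English description precedes it below -/
import Mathlib

section
/- Let Π be a monotone property on a finite set U, X a minimal Π-set, x ∈ X, and let Y, Y' ⊆ U \ {x} be distinct minimal sets such that (X \ {x}) ∪ Y and (X \ {x}) ∪ Y' are Π-sets. Then any minimal Π-set contained in (X \ {x}) ∪ Y must contain Y as a subset; consequently minimal Π-sets chosen inside (X \ {x}) ∪ Y and inside (X \ {x}) ∪ Y' are distinct. -/
theorem stmt1 {α : Type*} [DecidableEq α] (U : Finset α) (P : Finset α → Prop)
    (hmono : ∀ X Y : Finset α, X ⊆ Y → Y ⊆ U → P X → P Y)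
    (X : Finset α) (hXU : X ⊆ U) (hXP : P X) (hXmin : ∀ T ⊂ X, ¬ P T)
    (x : α) (hx : x ∈ X)
    (Y Y' : Finset α) (hY : Y ⊆ U.erase x) (hY' : Y' ⊆ U.erase x) (hYY' : Y ≠ Y')
    (hPY : P (X.erase x ∪ Y)) (hminY : ∀ Z ⊂ Y, ¬ P (X.erase x ∪ Z))
    (hPY' : P (X.erase x ∪ Y')) (hminY' : ∀ Z ⊂ Y', ¬ P (X.erase x ∪ Z)) :
    (∀ W : Finset α, W ⊆ X.erase x ∪ Y → P W → (∀ T ⊂ W, ¬ P T) → Y ⊆ W) ∧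
    (∀ W W' : Finset α, W ⊆ X.erase x ∪ Y → P W → (∀ T ⊂ W, ¬ P T) →
      W' ⊆ X.erase x ∪ Y' → P W' → (∀ T ⊂ W', ¬ P T) → W ≠ W') := by
  have hsubU : ∀ Z : Finset α, Z ⊆ U.erase x → X.erase x ∪ Z ⊆ U := by
    intro Z hZ
    intro a ha
    rcases Finset.mem_union.1 ha with h | h
    · exact hXU (Finset.erase_subset _ _ h)
    · exact Finset.erase_subset _ _ (hZ h)
  -- Y and Y' are disjoint from X.erase x
  have hdisj : ∀ (Z : Finset α), Z ⊆ U.erase x → P (X.erase x ∪ Z) →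
      (∀ W ⊂ Z, ¬ P (X.erase x ∪ W)) → ∀ a ∈ Z, a ∉ X.erase x := by
    intro Z hZU hPZ hminZ a haZ haX
    apply hminZ (Z.erase a) (Finset.erase_ssubset haZ)
    have : X.erase x ∪ Z.erase a = X.erase x ∪ Z := by
      apply Finset.Subset.antisymm
      · exact Finset.union_subset_union_right (Finset.erase_subset _ _)
      · intro b hb
        rcases Finset.mem_union.1 hb with h | h
        · exact Finset.mem_union_left _ h
        · by_cases hba : b = a
          · exact Finset.mem_union_left _ (hba ▸ haX)
          · exact Finset.mem_union_right _ (Finset.mem_erase.2 ⟨hba, h⟩)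
    rw [this]; exact hPZ
  have key : ∀ W : Finset α, W ⊆ X.erase x ∪ Y → P W → (∀ T ⊂ W, ¬ P T) → Y ⊆ W := by
    intro W hWsub hWP hWmin
    intro y hyY
    by_contra hyW
    apply hminY (Y.erase y) (Finset.erase_ssubset hyY)
    apply hmono W _ _ _ hWP
    · intro b hb
      rcases Finset.mem_union.1 (hWsub hb) with h | h
      · exact Finset.mem_union_left _ h
      · have hby : b ≠ y := by rintro rfl; exact hyW hb
        exact Finset.mem_union_right _ (Finset.mem_erase.2 ⟨hby, h⟩)
    · exact hsubU _ (fun b hb => hY (Finset.erase_subset _ _ hb))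
  refine ⟨key, ?_⟩
  have key' : ∀ W : Finset α, W ⊆ X.erase x ∪ Y' → P W → (∀ T ⊂ W, ¬ P T) → Y' ⊆ W := by
    intro W hWsub hWP hWmin
    intro y hyY
    by_contra hyW
    apply hminY' (Y'.erase y) (Finset.erase_ssubset hyY)
    apply hmono W _ _ _ hWP
    · intro b hb
      rcases Finset.mem_union.1 (hWsub hb) with h | h
      · exact Finset.mem_union_left _ h
      · have hby : b ≠ y := by rintro rfl; exact hyW hb
        exact Finset.mem_union_right _ (Finset.mem_erase.2 ⟨hby, h⟩)
    · exact hsubU _ (fun b hb => hY' (Finset.erase_subset _ _ hb))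
  rintro W W' hWsub hWP hWmin hW'sub hW'P hW'min rfl
  apply hYY'
  apply Finset.Subset.antisymm
  · intro a haY
    have haW : a ∈ W := key W hWsub hWP hWmin haY
    rcases Finset.mem_union.1 (hW'sub haW) with h | h
    · exact absurd h (hdisj Y hY hPY hminY a haY)
    · exact h
  · intro a haY'
    have haW : a ∈ W := key' W hW'sub hW'P hW'min haY'
    rcases Finset.mem_union.1 (hWsub haW) with h | h
    · exact absurd h (hdisj Y' hY' hPY' hminY' a haY')
    · exact h
end

section
/- Let Π be a monotone property on a finite set U, X a minimal Π-set, and x ∈ X. For every minimal Π-set Z ⊆ U \ {x} with |Z| ≤ k, there exists a set Y ⊆ U \ {x} with |Y| ≤ k such that Y is minimal with the property that (X \ {x}) ∪ Y is a Π-set, and for any minimal Π-set W contained in (X \ {x}) ∪ Y, we have |W ∪ Z| < |X ∪ Z|. -/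
theorem stmt2 {α : Type*} [DecidableEq α] (U : Finset α) (P : Finset α → Prop) (k : ℕ)
    (hk : 1 ≤ k)
    (hmono : ∀ X Y : Finset α, X ⊆ Y → Y ⊆ U → P X → P Y)
    (X : Finset α) (hXU : X ⊆ U) (hXP : P X) (hXmin : ∀ T ⊂ X, ¬ P T)
    (x : α) (hx : x ∈ X)
    (Z : Finset α) (hZU : Z ⊆ U.erase x) (hZP : P Z) (hZmin : ∀ T ⊂ Z, ¬ P T)
    (hZk : Z.card ≤ k) :
    ∃ Y : Finset α, Y ⊆ U.erase x ∧ Y.card ≤ k ∧ P (X.erase x ∪ Y) ∧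
      (∀ Y' ⊂ Y, ¬ P (X.erase x ∪ Y')) ∧
      ∀ W : Finset α, W ⊆ X.erase x ∪ Y → P W → (∀ T ⊂ W, ¬ P T) →
        (W ∪ Z).card < (X ∪ Z).card := by
  classical
  have hXeU : X.erase x ⊆ U := (Finset.erase_subset _ _).trans hXU
  have hZU' : Z ⊆ U := hZU.trans (Finset.erase_subset _ _)
  -- the filtered family
  set S : Finset (Finset α) := Z.powerset.filter (fun Y => P (X.erase x ∪ Y)) with hS
  have hZS : Z ∈ S := by
    simp only [hS, Finset.mem_filter, Finset.mem_powerset]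
    exact ⟨subset_rfl, hmono Z _ Finset.subset_union_right
      (Finset.union_subset hXeU hZU') hZP⟩
  obtain ⟨Y, hYS, hYmin⟩ := S.exists_min_image Finset.card ⟨Z, hZS⟩
  simp only [hS, Finset.mem_filter, Finset.mem_powerset] at hYS
  obtain ⟨hYZ, hYP⟩ := hYS
  refine ⟨Y, hYZ.trans hZU, (Finset.card_le_card hYZ).trans hZk, hYP, ?_, ?_⟩
  · intro Y' hY' hY'P
    have hmem : Y' ∈ S := by
      simp only [hS, Finset.mem_filter, Finset.mem_powerset]
      exact ⟨hY'.subset.trans hYZ, hY'P⟩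
    have := hYmin Y' hmem
    exact absurd (Finset.card_lt_card hY') (by omega)
  · intro W hW _ _
    have hxZ : x ∉ Z := fun h => (Finset.mem_erase.mp (hZU h)).1 rfl
    have h1 : W ∪ Z ⊆ X.erase x ∪ Z := by
      refine Finset.union_subset (hW.trans ?_) Finset.subset_union_right
      exact Finset.union_subset Finset.subset_union_left
        (hYZ.trans Finset.subset_union_right)
    have h2 : X.erase x ∪ Z = (X ∪ Z).erase x := by
      ext a; simp only [Finset.mem_erase, Finset.mem_union]
      constructor
      · rintro (⟨h1, h2⟩ | h)
        · exact ⟨h1, Or.inl h2⟩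
        · exact ⟨fun he => hxZ (he ▸ h), Or.inr h⟩
      · rintro ⟨h1, h2 | h2⟩
        · exact Or.inl ⟨h1, h2⟩
        · exact Or.inr h2
    have hxXZ : x ∈ X ∪ Z := Finset.mem_union_left _ hx
    calc (W ∪ Z).card ≤ (X.erase x ∪ Z).card := Finset.card_le_card h1
      _ < (X ∪ Z).card := by
          rw [h2]
          exact Finset.card_erase_lt_of_mem hxXZ
end

section
/- There exists a family of graphs G_n on Θ(n) vertices and minimal star forest vertex deletion sets X_n of G_n (in fact |X_n| = 1) and a vertex r ∈ X_n such that the number of inclusion-minimal vertex sets Y ⊆ V(G_n) \ {r} with G_n − ((X_n \ {r}) ∪ Y) a star forest is at least 2^n. Concretely: take the star K_{1,2n} with center r and leaves v_1,…,v_{2n}, add edges {v_{2i−1}, v_{2i}} for 1 ≤ i ≤ n; then X = {r} is a minimal star forest vertex deletion set and there are at least 2^n minimal such sets Y. -/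
/-- Every connected component of `H` is a star. -/
def IsStarForest {V : Type*} (H : SimpleGraph V) : Prop :=
  ∀ u v : V, H.Adj u v → ((∀ w, H.Adj u w → w = v) ∨ (∀ w, H.Adj v w → w = u))

/-- The star `K_{1,2n}` with center `none` and leaves `some i`, together with a
perfect matching on the leaves pairing `v_{2i-1}` with `v_{2i}`. -/
def Gstar (n : ℕ) : SimpleGraph (Option (Fin (2 * n))) :=
  SimpleGraph.fromRel (fun a b =>
    a = none ∨ (∃ i j : Fin (2 * n), a = some i ∧ b = some j ∧
      (i : ℕ) / 2 = (j : ℕ) / 2))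

/-!
Since the centre is adjacent to every leaf, deleting a set `D` of leaves leaves a star forest
exactly when `D` meets every matching edge. The minimal such `D` pick one endpoint of each of the
`n` matching edges, so there are `2 ^ n` of them. Deleting the centre leaves a perfect matching,
while deleting nothing leaves triangles.
-/

namespace IsStarForest

variable {V : Type*} {H : SimpleGraph V}

theorem of_adj_unique (h : ∀ u v w, H.Adj u v → H.Adj u w → v = w) : IsStarForest H :=
  fun u v huv => .inl fun w huw => h u w v huw huv

/-- An edge avoiding the universal vertex `c` would span a triangle with `c`. -/
theorem iff_of_forall_adj {c : V} (hc : ∀ v, v ≠ c → H.Adj c v) :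
    IsStarForest H ↔ ∀ u v, H.Adj u v → u = c ∨ v = c := by
  constructor
  · intro h u v huv
    by_contra! hne
    rcases h u v huv with hu | hv
    · exact hne.2 (hu c (hc u hne.1).symm).symm
    · exact hne.1 (hv c (hc v hne.2).symm).symm
  · intro h u v huv
    rcases h u v huv with rfl | rfl
    · exact .inr fun w hvw => (h v w hvw).resolve_left (H.ne_of_adj huv).symm
    · exact .inl fun w huw => (h u w huw).resolve_left (H.ne_of_adj huv)

end IsStarForest

namespace Gstar

variable {n : ℕ}

/-- `leaf k false` and `leaf k true` are the endpoints `v_{2k+1}`, `v_{2k+2}` of the `k`-th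
matching edge (the vertex `v_m` is `some (m - 1)`). -/
def leaf (k : Fin n) (b : Bool) : Fin (2 * n) :=
  ⟨2 * k + b.toNat, by cases b <;> simp; omega⟩

theorem leaf_inj {k k' : Fin n} {b b' : Bool} : leaf k b = leaf k' b' ↔ k = k' ∧ b = b' := by
  cases b <;> cases b' <;> simp [leaf, Fin.ext_iff] <;> omega

theorem exists_leaf_eq (i : Fin (2 * n)) : ∃ k b, leaf k b = i := by
  refine ⟨⟨i / 2, by omega⟩, decide (i.val % 2 = 1), Fin.ext ?_⟩
  by_cases h : i.val % 2 = 1 <;> simp [leaf, h] <;> omega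

theorem adj_none (i : Fin (2 * n)) : (Gstar n).Adj none (some i) := by
  simp [Gstar]

theorem adj_some {i j : Fin (2 * n)} :
    (Gstar n).Adj (some i) (some j) ↔ i ≠ j ∧ (i : ℕ) / 2 = j / 2 := by
  simpa [Gstar] using fun _ h => h.symm

theorem adj_leaf {k k' : Fin n} {b b' : Bool} :
    (Gstar n).Adj (some (leaf k b)) (some (leaf k' b')) ↔ k = k' ∧ b ≠ b' := by
  cases b <;> cases b' <;> simp [adj_some, leaf, Fin.ext_iff] <;> omega

theorem isStarForest_induce_compl_none :
    IsStarForest ((Gstar n).induce ({none} : Set (Option (Fin (2 * n))))ᶜ) := by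
  refine IsStarForest.of_adj_unique fun ⟨u, hu⟩ ⟨v, hv⟩ ⟨w, hw⟩ huv huw => ?_
  obtain ⟨i, rfl⟩ := Option.ne_none_iff_exists'.mp hu
  obtain ⟨j, rfl⟩ := Option.ne_none_iff_exists'.mp hv
  obtain ⟨l, rfl⟩ := Option.ne_none_iff_exists'.mp hw
  obtain ⟨k, b, rfl⟩ := exists_leaf_eq i
  obtain ⟨k', b', rfl⟩ := exists_leaf_eq j
  obtain ⟨k'', b'', rfl⟩ := exists_leaf_eq l
  rw [SimpleGraph.induce_adj, adj_leaf] at huv huw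
  obtain ⟨rfl, hbb'⟩ := huv
  obtain ⟨rfl, hbb''⟩ := huw
  have : b' = b'' := by cases b <;> cases b' <;> cases b'' <;> simp_all
  simp [this]

theorem isStarForest_induce_compl_iff {D : Set (Option (Fin (2 * n)))} (hD : none ∉ D) :
    IsStarForest ((Gstar n).induce Dᶜ) ↔ ∀ k, some (leaf k false) ∈ D ∨ some (leaf k true) ∈ D := by
  rw [IsStarForest.iff_of_forall_adj (c := ⟨none, hD⟩) ?universal]
  case universal =>
    rintro ⟨_ | i, hi⟩ hne
    · exact absurd rfl hne
    · exact adj_none i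
  constructor
  · intro h k
    by_contra! hk
    simpa using h ⟨_, hk.1⟩ ⟨_, hk.2⟩ (adj_leaf.mpr ⟨rfl, Bool.false_ne_true⟩)
  · rintro h ⟨_ | i, hi⟩ ⟨_ | j, hj⟩ hij
    · exact .inl rfl
    · exact .inl rfl
    · exact .inr rfl
    obtain ⟨k, b, rfl⟩ := exists_leaf_eq i
    obtain ⟨k', b', rfl⟩ := exists_leaf_eq j
    obtain ⟨rfl, hbb'⟩ := adj_leaf.mp hij
    exfalso
    rcases h k with hk | hk <;> cases b <;> cases b' <;>
      first | exact hi hk | exact hj hk | exact hbb' rfl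

def transversal (f : Fin n → Bool) : Set (Option (Fin (2 * n))) :=
  Set.range fun k => some (leaf k (f k))

theorem none_notMem_transversal (f : Fin n → Bool) : none ∉ transversal f := by
  simp [transversal]

theorem some_leaf_mem_transversal {f : Fin n → Bool} {k : Fin n} {b : Bool} :
    some (leaf k b) ∈ transversal f ↔ f k = b := by
  simp [transversal, leaf_inj]

theorem transversal_injective : Function.Injective (transversal (n := n)) := by
  intro f g hfg
  funext k
  have := congrArg (some (leaf k (f k)) ∈ ·) hfg
  simp only [some_leaf_mem_transversal, eq_iff_iff, true_iff] at this
  exact this.symm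

theorem isStarForest_induce_compl_transversal (f : Fin n → Bool) :
    IsStarForest ((Gstar n).induce (transversal f)ᶜ) := by
  rw [isStarForest_induce_compl_iff (none_notMem_transversal f)]
  intro k
  simp only [some_leaf_mem_transversal]
  cases f k <;> simp

theorem not_isStarForest_of_ssubset_transversal {f : Fin n → Bool}
    {Y : Set (Option (Fin (2 * n)))} (hY : Y ⊂ transversal f) :
    ¬ IsStarForest ((Gstar n).induce Yᶜ) := by
  obtain ⟨_, ⟨k, rfl⟩, hkY⟩ := Set.exists_of_ssubset hY
  have hpartner : some (leaf k (!f k)) ∉ Y := fun h => by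
    simpa [some_leaf_mem_transversal] using hY.subset h
  have hleaves : ∀ b, some (leaf k b) ∉ Y := by
    intro b
    obtain rfl | rfl : b = f k ∨ b = !f k := by cases b <;> cases f k <;> simp
    exacts [hkY, hpartner]
  rw [isStarForest_induce_compl_iff fun h => none_notMem_transversal f (hY.subset h)]
  exact fun h => (h k).elim (hleaves false) (hleaves true)

end Gstar

open Gstar in
theorem stmt7 (n : ℕ) (hn : 1 ≤ n) :
    IsStarForest ((Gstar n).induce (({none} : Set (Option (Fin (2 * n))))ᶜ)) ∧
    (∀ S : Set (Option (Fin (2 * n))), S ⊂ {none} →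
      ¬ IsStarForest ((Gstar n).induce Sᶜ)) ∧
    2 ^ n ≤ {Y : Set (Option (Fin (2 * n))) | none ∉ Y ∧
        IsStarForest ((Gstar n).induce
          (((({none} : Set (Option (Fin (2 * n)))) \ {none}) ∪ Y)ᶜ)) ∧
        ∀ Y' ⊂ Y, ¬ IsStarForest ((Gstar n).induce
          (((({none} : Set (Option (Fin (2 * n)))) \ {none}) ∪ Y')ᶜ))}.ncard := by
  refine ⟨isStarForest_induce_compl_none, ?_, ?_⟩
  · intro S hS
    rw [Set.ssubset_singleton_iff.mp hS, isStarForest_induce_compl_iff (Set.notMem_empty none)]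
    simpa using (⟨⟨0, hn⟩⟩ : Nonempty (Fin n))
  · calc 2 ^ n = Nat.card (Fin n → Bool) := by simp
      _ = (Set.range transversal).ncard := (Set.ncard_range_of_injective transversal_injective).symm
      _ ≤ _ := Set.ncard_le_ncard ?_ (Set.toFinite _)
    rintro _ ⟨f, rfl⟩
    refine ⟨none_notMem_transversal f, ?_, fun Y hY => ?_⟩ <;>
      rw [Set.sdiff_self, Set.empty_union]
    exacts [isStarForest_induce_compl_transversal f, not_isStarForest_of_ssubset_transversal hY]
end

section
/- Let G be a graph of maximum degree at most Δ, X a minimal dominating set of G, and x ∈ X. Then the set U of vertices not dominated by X \ {x} satisfies U ⊆ N[x] and |U| ≤ Δ + 1, and every inclusion-minimal set Y ⊆ V \ {x} such that (X \ {x}) ∪ Y is a dominating set satisfies |Y| ≤ Δ + 1 and Y ⊆ ∪_{u ∈ U} N[u]; consequently the number of such minimal Y is at most (Δ+1)^{Δ+1}. -/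
theorem stmt8 {V : Type*} [Fintype V] [DecidableEq V] (G : SimpleGraph V)
    [DecidableRel G.Adj] (Δ : ℕ) (hΔ : ∀ v : V, G.degree v ≤ Δ)
    (X : Finset V)
    (hdom : ∀ v : V, v ∈ X ∨ ∃ u ∈ X, G.Adj u v)
    (hmin : ∀ X' ⊂ X, ¬ ∀ v : V, v ∈ X' ∨ ∃ u ∈ X', G.Adj u v)
    (x : V) (hx : x ∈ X) :
    let Un : Finset V :=
      Finset.univ.filter (fun v => ¬ (v ∈ X.erase x ∨ ∃ u ∈ X.erase x, G.Adj u v))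
    Un ⊆ insert x (G.neighborFinset x) ∧
    Un.card ≤ Δ + 1 ∧
    (∀ Y : Finset V, x ∉ Y →
      (∀ v : V, v ∈ X.erase x ∪ Y ∨ ∃ u ∈ X.erase x ∪ Y, G.Adj u v) →
      (∀ Y' ⊂ Y, ¬ ∀ v : V, v ∈ X.erase x ∪ Y' ∨ ∃ u ∈ X.erase x ∪ Y', G.Adj u v) →
      Y.card ≤ Δ + 1 ∧ Y ⊆ Un.biUnion (fun u => insert u (G.neighborFinset u))) ∧
    {Y : Finset V | x ∉ Y ∧
      (∀ v : V, v ∈ X.erase x ∪ Y ∨ ∃ u ∈ X.erase x ∪ Y, G.Adj u v) ∧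
      ∀ Y' ⊂ Y, ¬ ∀ v : V, v ∈ X.erase x ∪ Y' ∨ ∃ u ∈ X.erase x ∪ Y', G.Adj u v}.ncard
      ≤ (Δ + 1) ^ (Δ + 1) := by
  intro Un
  classical
  have hUnmem : ∀ v, v ∈ Un ↔ ¬ (v ∈ X.erase x ∨ ∃ u ∈ X.erase x, G.Adj u v) := by
    intro v
    simp only [Un, Finset.mem_filter, Finset.mem_univ, true_and]
  -- Un ⊆ N[x]
  have hUnsub : Un ⊆ insert x (G.neighborFinset x) := by
    intro v hv
    rw [hUnmem] at hv
    push_neg at hv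
    obtain ⟨h1, h2⟩ := hv
    rcases hdom v with hvX | ⟨u, hu, hadj⟩
    · have hvx : v = x := by
        by_contra hne
        exact h1 (Finset.mem_erase.mpr ⟨hne, hvX⟩)
      simp [hvx]
    · have hux : u = x := by
        by_contra hne
        exact h2 u (Finset.mem_erase.mpr ⟨hne, hu⟩) hadj
      subst hux
      exact Finset.mem_insert_of_mem ((G.mem_neighborFinset u v).mpr hadj)
  have hUncard : Un.card ≤ Δ + 1 := by
    calc Un.card ≤ (insert x (G.neighborFinset x)).card := Finset.card_le_card hUnsub
    _ ≤ (G.neighborFinset x).card + 1 := Finset.card_insert_le _ _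
    _ ≤ Δ + 1 := by
        have := hΔ x
        rw [G.card_neighborFinset_eq_degree]
        omega
  -- key lemma: private vertices for minimal Y
  have key : ∀ Y : Finset V, x ∉ Y →
      (∀ v : V, v ∈ X.erase x ∪ Y ∨ ∃ u ∈ X.erase x ∪ Y, G.Adj u v) →
      (∀ Y' ⊂ Y, ¬ ∀ v : V, v ∈ X.erase x ∪ Y' ∨ ∃ u ∈ X.erase x ∪ Y', G.Adj u v) →
      ∀ y ∈ Y, ∃ v ∈ Un, (v = y ∨ G.Adj y v) ∧
        ∀ y' ∈ Y, (v = y' ∨ G.Adj y' v) → y' = y := by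
    intro Y hxY hdomY hminY y hy
    have hsub : Y.erase y ⊂ Y := Finset.erase_ssubset hy
    have hne := hminY (Y.erase y) hsub
    push_neg at hne
    obtain ⟨v, hv1, hv2⟩ := hne
    refine ⟨v, ?_, ?_, ?_⟩
    · rw [hUnmem]
      rintro (h | ⟨u, hu, hadj⟩)
      · exact hv1 (Finset.mem_union_left _ h)
      · exact hv2 u (Finset.mem_union_left _ hu) hadj
    · rcases hdomY v with h | ⟨u, hu, hadj⟩
      · rcases Finset.mem_union.mp h with h' | h'
        · exact absurd (Finset.mem_union_left _ h') hv1
        · left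
          by_contra hne
          exact hv1 (Finset.mem_union_right _ (Finset.mem_erase.mpr ⟨hne, h'⟩))
      · rcases Finset.mem_union.mp hu with h' | h'
        · exact absurd hadj (hv2 u (Finset.mem_union_left _ h'))
        · have huy : u = y := by
            by_contra hne
            exact hv2 u (Finset.mem_union_right _ (Finset.mem_erase.mpr ⟨hne, h'⟩)) hadj
          right; exact huy ▸ hadj
    · rintro y' hy' (h | h)
      all_goals by_contra hney
      · subst h
        exact hv1 (Finset.mem_union_right _ (Finset.mem_erase.mpr ⟨hney, hy'⟩))
      · exact hv2 y' (Finset.mem_union_right _ (Finset.mem_erase.mpr ⟨hney, hy'⟩)) h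
  -- each u ∈ Un is dominated by Y, for any dominating Y
  have hYdom : ∀ Y : Finset V,
      (∀ v : V, v ∈ X.erase x ∪ Y ∨ ∃ u ∈ X.erase x ∪ Y, G.Adj u v) →
      ∀ u ∈ Un, ∃ y ∈ Y, u = y ∨ G.Adj y u := by
    intro Y hdomY u hu
    rw [hUnmem] at hu
    push_neg at hu
    obtain ⟨h1, h2⟩ := hu
    rcases hdomY u with h | ⟨w, hw, hadj⟩
    · rcases Finset.mem_union.mp h with h' | h'
      · exact absurd h' h1
      · exact ⟨u, h', Or.inl rfl⟩
    · rcases Finset.mem_union.mp hw with h' | h'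
      · exact absurd hadj (h2 w h')
      · exact ⟨w, h', Or.inr hadj⟩
  -- part 3
  have part3 : ∀ Y : Finset V, x ∉ Y →
      (∀ v : V, v ∈ X.erase x ∪ Y ∨ ∃ u ∈ X.erase x ∪ Y, G.Adj u v) →
      (∀ Y' ⊂ Y, ¬ ∀ v : V, v ∈ X.erase x ∪ Y' ∨ ∃ u ∈ X.erase x ∪ Y', G.Adj u v) →
      Y.card ≤ Δ + 1 ∧ Y ⊆ Un.biUnion (fun u => insert u (G.neighborFinset u)) := by
    intro Y hxY hdomY hminY
    have key' : ∀ y, ∃ v, y ∈ Y → (v ∈ Un ∧ (v = y ∨ G.Adj y v) ∧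
        ∀ y' ∈ Y, (v = y' ∨ G.Adj y' v) → y' = y) := by
      intro y
      by_cases hy : y ∈ Y
      · obtain ⟨v, hv1, hv2, hv3⟩ := key Y hxY hdomY hminY y hy
        exact ⟨v, fun _ => ⟨hv1, hv2, hv3⟩⟩
      · exact ⟨x, fun h => absurd h hy⟩
    choose f hf using key'
    constructor
    · calc Y.card ≤ Un.card := by
            apply Finset.card_le_card_of_injOn f (fun y hy => (hf y hy).1)
            intro y₁ hy₁ y₂ hy₂ heq
            have h1 := hf y₁ (by exact hy₁)
            have h2 := hf y₂ (by exact hy₂)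
            exact h2.2.2 y₁ hy₁ (heq ▸ h1.2.1)
      _ ≤ Δ + 1 := hUncard
    · intro y hy
      obtain ⟨hv1, hv2, hv3⟩ := hf y hy
      rw [Finset.mem_biUnion]
      refine ⟨f y, hv1, ?_⟩
      rcases hv2 with h | h
      · simp [h]
      · exact Finset.mem_insert_of_mem ((G.mem_neighborFinset _ _).mpr h.symm)
  refine ⟨hUnsub, hUncard, part3, ?_⟩
  -- counting
  set T := Un.pi (fun u => insert u (G.neighborFinset u)) with hT
  have hpick : ∀ (Y : Finset V) (u : V), ∃ y, (∃ y' ∈ Y, u = y' ∨ G.Adj y' u) →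
      (y ∈ Y ∧ (u = y ∨ G.Adj y u)) := by
    intro Y u
    by_cases h : ∃ y' ∈ Y, u = y' ∨ G.Adj y' u
    · obtain ⟨y, hy, hd⟩ := h
      exact ⟨y, fun _ => ⟨hy, hd⟩⟩
    · exact ⟨x, fun hh => absurd hh h⟩
  choose F hF using hpick
  set Φ : Finset V → (∀ u ∈ Un, V) := fun Y => fun u _ => F Y u with hΦ
  have hmaps : ∀ Y ∈ {Y : Finset V | x ∉ Y ∧
      (∀ v : V, v ∈ X.erase x ∪ Y ∨ ∃ u ∈ X.erase x ∪ Y, G.Adj u v) ∧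
      ∀ Y' ⊂ Y, ¬ ∀ v : V, v ∈ X.erase x ∪ Y' ∨ ∃ u ∈ X.erase x ∪ Y', G.Adj u v},
      Φ Y ∈ T := by
    rintro Y ⟨hxY, hdomY, hminY⟩
    rw [Finset.mem_pi]
    intro u hu
    obtain ⟨hy, hd⟩ := hF Y u (hYdom Y hdomY u hu)
    show F Y u ∈ insert u (G.neighborFinset u)
    rcases hd with h | h
    · rw [← h]; exact Finset.mem_insert_self _ _
    · exact Finset.mem_insert_of_mem ((G.mem_neighborFinset _ _).mpr h.symm)
  have hinj : Set.InjOn Φ {Y : Finset V | x ∉ Y ∧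
      (∀ v : V, v ∈ X.erase x ∪ Y ∨ ∃ u ∈ X.erase x ∪ Y, G.Adj u v) ∧
      ∀ Y' ⊂ Y, ¬ ∀ v : V, v ∈ X.erase x ∪ Y' ∨ ∃ u ∈ X.erase x ∪ Y', G.Adj u v} := by
    rintro Y₁ ⟨hx1, hdom1, hmin1⟩ Y₂ ⟨hx2, hdom2, hmin2⟩ heq
    have hincl : ∀ (Y Y' : Finset V), x ∉ Y →
        (∀ v : V, v ∈ X.erase x ∪ Y ∨ ∃ u ∈ X.erase x ∪ Y, G.Adj u v) →
        (∀ Y'' ⊂ Y, ¬ ∀ v : V, v ∈ X.erase x ∪ Y'' ∨ ∃ u ∈ X.erase x ∪ Y'', G.Adj u v) →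
        (∀ v : V, v ∈ X.erase x ∪ Y' ∨ ∃ u ∈ X.erase x ∪ Y', G.Adj u v) →
        Φ Y = Φ Y' → Y ⊆ Y' := by
      intro Y Y' hxY hdomY hminY hdomY' hΦeq y hy
      obtain ⟨v, hvUn, hvd, hvu⟩ := key Y hxY hdomY hminY y hy
      have h1 := hF Y v ⟨y, hy, hvd⟩
      have hFy : F Y v = y := hvu _ h1.1 h1.2
      have h2 := hF Y' v (hYdom Y' hdomY' v hvUn)
      have : F Y v = F Y' v := by
        have := congrFun (congrFun hΦeq v) hvUn
        exact this
      rw [hFy] at this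
      rw [this]
      exact h2.1
    exact Finset.Subset.antisymm (hincl Y₁ Y₂ hx1 hdom1 hmin1 hdom2 heq)
      (hincl Y₂ Y₁ hx2 hdom2 hmin2 hdom1 heq.symm)
  calc ({Y : Finset V | x ∉ Y ∧
      (∀ v : V, v ∈ X.erase x ∪ Y ∨ ∃ u ∈ X.erase x ∪ Y, G.Adj u v) ∧
      ∀ Y' ⊂ Y, ¬ ∀ v : V, v ∈ X.erase x ∪ Y' ∨ ∃ u ∈ X.erase x ∪ Y', G.Adj u v}).ncard
      ≤ (↑T : Set (∀ u ∈ Un, V)).ncard := by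
        apply Set.ncard_le_ncard_of_injOn Φ (fun Y hY => hmaps Y hY) hinj
    _ = T.card := Set.ncard_coe_finset T
    _ ≤ (Δ + 1) ^ (Δ + 1) := by
        rw [hT, Finset.card_pi]
        calc ∏ u ∈ Un, (insert u (G.neighborFinset u)).card
            ≤ (Δ + 1) ^ Un.card := by
              apply Finset.prod_le_pow_card
              intro u _
              calc (insert u (G.neighborFinset u)).card
                  ≤ (G.neighborFinset u).card + 1 := Finset.card_insert_le _ _
                _ ≤ Δ + 1 := by
                    have := hΔ u
                    rw [G.card_neighborFinset_eq_degree]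
                    omega
          _ ≤ (Δ + 1) ^ (Δ + 1) := Nat.pow_le_pow_right (by omega) hUncard
end

section
/- Let X be a minimal edge dominating set of a graph G, x = {u,v} ∈ X, e an edge incident to u with e ≠ x, and f an edge incident to v with f ≠ x. Then (X \ {x}) ∪ {e, f} is an edge dominating set of G. -/
/-- `e` is in `D` or shares an endpoint with an edge of `D`. -/
def EdgeDominated {V : Type*} (D : Finset (Sym2 V)) (e : Sym2 V) : Prop :=
  e ∈ D ∨ ∃ f ∈ D, ∃ v : V, v ∈ f ∧ v ∈ e

/-- `D` is an edge dominating set of `G`. -/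
def IsEDS {V : Type*} [Fintype V] [DecidableEq V] (G : SimpleGraph V)
    [DecidableRel G.Adj] (D : Finset (Sym2 V)) : Prop :=
  D ⊆ G.edgeFinset ∧ ∀ e ∈ G.edgeFinset, EdgeDominated D e

theorem stmt10 {V : Type*} [Fintype V] [DecidableEq V] (G : SimpleGraph V)
    [DecidableRel G.Adj] (X : Finset (Sym2 V))
    (hX : IsEDS G X) (hmin : ∀ X' ⊂ X, ¬ IsEDS G X')
    (u v : V) (hx : s(u, v) ∈ X)
    (e : Sym2 V) (he : e ∈ G.edgeFinset) (heu : u ∈ e) (hex : e ≠ s(u, v))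
    (f : Sym2 V) (hf : f ∈ G.edgeFinset) (hfv : v ∈ f) (hfx : f ≠ s(u, v)) :
    IsEDS G (X.erase s(u, v) ∪ {e, f}) := by
  have heD : e ∈ X.erase s(u, v) ∪ {e, f} := by simp
  have hfD : f ∈ X.erase s(u, v) ∪ {e, f} := by simp
  constructor
  · intro g hg
    rcases Finset.mem_union.1 hg with h | h
    · exact hX.1 (Finset.mem_of_mem_erase h)
    · rcases Finset.mem_insert.1 h with rfl | h
      · exact he
      · simp at h; subst h; exact hf
  · intro g hg
    rcases hX.2 g hg with hgX | ⟨d, hdX, w, hwd, hwg⟩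
    · by_cases hge : g = s(u, v)
      · subst hge
        exact Or.inr ⟨e, heD, u, heu, by simp⟩
      · exact Or.inl (Finset.mem_union_left _ (Finset.mem_erase.2 ⟨hge, hgX⟩))
    · by_cases hdx : d = s(u, v)
      · subst hdx
        rcases Sym2.mem_iff.1 hwd with rfl | rfl
        · exact Or.inr ⟨e, heD, w, heu, hwg⟩
        · exact Or.inr ⟨f, hfD, w, hfv, hwg⟩
      · exact Or.inr ⟨d, Finset.mem_union_left _ (Finset.mem_erase.2 ⟨hdx, hdX⟩), w, hwd, hwg⟩
end

section
/- Let X and Y be distinct minimal edge dominating sets of a graph G and x = {u,v} ∈ X \ Y. Suppose Y contains edges e and f incident to u and v respectively (e, f ≠ x). Then for any minimal edge dominating set Z contained in (X \ {x}) ∪ {e, f}, we have |Z ∪ Y| < |X ∪ Y|. -/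
theorem stmt11 {V : Type*} [Fintype V] [DecidableEq V] (G : SimpleGraph V)
    [DecidableRel G.Adj] (X Y : Finset (Sym2 V)) (hXY : X ≠ Y)
    (hX : IsEDS G X) (hXmin : ∀ X' ⊂ X, ¬ IsEDS G X')
    (hY : IsEDS G Y) (hYmin : ∀ Y' ⊂ Y, ¬ IsEDS G Y')
    (u v : V) (hxX : s(u, v) ∈ X) (hxY : s(u, v) ∉ Y)
    (e : Sym2 V) (heY : e ∈ Y) (heu : u ∈ e) (hex : e ≠ s(u, v))
    (f : Sym2 V) (hfY : f ∈ Y) (hfv : v ∈ f) (hfx : f ≠ s(u, v)) :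
    ∀ Z : Finset (Sym2 V), Z ⊆ X.erase s(u, v) ∪ {e, f} →
      IsEDS G Z → (∀ Z' ⊂ Z, ¬ IsEDS G Z') →
      (Z ∪ Y).card < (X ∪ Y).card := by
  intro Z hZ _ _
  apply Finset.card_lt_card
  constructor
  · intro a ha
    rcases Finset.mem_union.mp ha with h | h
    · rcases Finset.mem_union.mp (hZ h) with h' | h'
      · exact Finset.mem_union.mpr (Or.inl (Finset.mem_of_mem_erase h'))
      · simp only [Finset.mem_insert, Finset.mem_singleton] at h'
        rcases h' with rfl | rfl <;> exact Finset.mem_union.mpr (Or.inr (by assumption))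
    · exact Finset.mem_union.mpr (Or.inr h)
  · intro hsub
    have hx : s(u, v) ∈ Z ∪ Y := hsub (Finset.mem_union.mpr (Or.inl hxX))
    rcases Finset.mem_union.mp hx with h | h
    · rcases Finset.mem_union.mp (hZ h) with h' | h'
      · exact (Finset.ne_of_mem_erase h') rfl
      · simp only [Finset.mem_insert, Finset.mem_singleton] at h'
        rcases h' with h' | h' <;> simp_all
    · exact hxY h
end

section
/- Let X and Y be distinct minimal edge dominating sets of a graph G and x = {u,v} ∈ X \ Y. If X contains an edge in Γ(v) \ {x} and Y contains no edge incident to v, then Y contains an edge e incident to u, and (X \ {x}) ∪ {e} is an edge dominating set of G; moreover for any minimal edge dominating set Z ⊆ (X \ {x}) ∪ {e}, it holds that |Z ∪ Y| < |X ∪ Y|. -/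
theorem stmt12 {V : Type*} [Fintype V] [DecidableEq V] (G : SimpleGraph V)
    [DecidableRel G.Adj] (X Y : Finset (Sym2 V)) (hXY : X ≠ Y)
    (hX : IsEDS G X) (hXmin : ∀ X' ⊂ X, ¬ IsEDS G X')
    (hY : IsEDS G Y) (hYmin : ∀ Y' ⊂ Y, ¬ IsEDS G Y')
    (u v : V) (hxX : s(u, v) ∈ X) (hxY : s(u, v) ∉ Y)
    (hXv : ∃ g ∈ X, v ∈ g ∧ g ≠ s(u, v))
    (hYv : ∀ f ∈ Y, v ∉ f) :
    ∃ e ∈ Y, u ∈ e ∧ IsEDS G (X.erase s(u, v) ∪ {e}) ∧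
      ∀ Z : Finset (Sym2 V), Z ⊆ X.erase s(u, v) ∪ {e} →
        IsEDS G Z → (∀ Z' ⊂ Z, ¬ IsEDS G Z') →
        (Z ∪ Y).card < (X ∪ Y).card := by
  obtain ⟨hYsub, hYdom⟩ := hY
  obtain ⟨hXsub, hXdom⟩ := hX
  have hxG : s(u, v) ∈ G.edgeFinset := hXsub hxX
  rcases hYdom _ hxG with hmem | ⟨f, hfY, w, hwf, hwx⟩
  · exact absurd hmem hxY
  have hwu : w = u := by
    rcases Sym2.mem_iff.1 hwx with rfl | rfl
    · rfl
    · exact absurd hwf (hYv f hfY)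
  rw [hwu] at hwf
  refine ⟨f, hfY, hwf, ⟨?_, ?_⟩, ?_⟩
  · intro g hg
    rcases Finset.mem_union.1 hg with h | h
    · exact hXsub (Finset.mem_of_mem_erase h)
    · exact hYsub (Finset.mem_singleton.1 h ▸ hfY)
  · intro g hg
    rcases hXdom g hg with hmem | ⟨f', hf'X, w', hw'f, hw'g⟩
    · by_cases hgx : g = s(u, v)
      · subst hgx
        exact Or.inr ⟨f, Finset.mem_union_right _ (Finset.mem_singleton_self _), u, hwf,
          Sym2.mem_mk_left u v⟩
      · exact Or.inl (Finset.mem_union_left _ (Finset.mem_erase.2 ⟨hgx, hmem⟩))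
    · by_cases hfx : f' = s(u, v)
      · subst hfx
        rcases Sym2.mem_iff.1 hw'f with rfl | rfl
        · exact Or.inr ⟨f, Finset.mem_union_right _ (Finset.mem_singleton_self _), w', hwf, hw'g⟩
        · obtain ⟨g', hg'X, hvg', hg'ne⟩ := hXv
          exact Or.inr ⟨g', Finset.mem_union_left _ (Finset.mem_erase.2 ⟨hg'ne, hg'X⟩), w',
            hvg', hw'g⟩
      · exact Or.inr ⟨f', Finset.mem_union_left _ (Finset.mem_erase.2 ⟨hfx, hf'X⟩), w', hw'f, hw'g⟩
  · intro Z hZ _ _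
    apply Finset.card_lt_card
    rw [Finset.ssubset_def]
    refine ⟨?_, ?_⟩
    · intro a ha
      rcases Finset.mem_union.1 ha with h | h
      · rcases Finset.mem_union.1 (hZ h) with h' | h'
        · exact Finset.mem_union_left _ (Finset.mem_of_mem_erase h')
        · exact Finset.mem_union_right _ (Finset.mem_singleton.1 h' ▸ hfY)
      · exact Finset.mem_union_right _ h
    · intro hsub
      have hx : s(u, v) ∈ Z ∪ Y := hsub (Finset.mem_union_left _ hxX)
      rcases Finset.mem_union.1 hx with h | h
      · rcases Finset.mem_union.1 (hZ h) with h' | h'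
        · exact (Finset.mem_erase.1 h').1 rfl
        · exact hxY (Finset.mem_singleton.1 h' ▸ hfY)
      · exact hxY h
end

section
/- Let T be a minimal Steiner tree of (G, W), e ∈ E(T), and C_1, C_2 the two components of T − e. Then every inclusion-minimal edge set Y ⊆ E(G) \ {e} such that (E(T) \ {e}) ∪ Y is a Steiner subgraph of (G, W) is the edge set of a path in G between a vertex of C_1 and a vertex of C_2 avoiding e whose internal vertices lie outside V(C_1) ∪ V(C_2). -/
/-- `F` is (the edge set of) a Steiner subgraph of `G` with terminal set `W`. -/
def IsSteiner {V : Type*} (G : SimpleGraph V) (W : Set V) (F : Set (Sym2 V)) : Prop :=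
  F ⊆ G.edgeSet ∧ ∀ w ∈ W, ∀ w' ∈ W, (SimpleGraph.fromEdgeSet F).Reachable w w'

open SimpleGraph in
private lemma walk_split {V : Type*} {F : Set (Sym2 V)} {a b u v : V}
    (p : (SimpleGraph.fromEdgeSet (insert s(a, b) F)).Walk u v) :
    (SimpleGraph.fromEdgeSet F).Reachable u a ∨ (SimpleGraph.fromEdgeSet F).Reachable u b ∨
      (SimpleGraph.fromEdgeSet F).Reachable u v := by
  induction p with
  | nil => exact Or.inr (Or.inr (Reachable.refl _))
  | cons h p ih =>
    rw [SimpleGraph.fromEdgeSet_adj] at h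
    obtain ⟨hmem, hne⟩ := h
    rcases Set.mem_insert_iff.mp hmem with heq | hF
    · rcases Sym2.eq_iff.mp heq with ⟨rfl, rfl⟩ | ⟨rfl, rfl⟩
      · exact Or.inl (Reachable.refl _)
      · exact Or.inr (Or.inl (Reachable.refl _))
    · have hadj' : (SimpleGraph.fromEdgeSet F).Adj _ _ :=
        (SimpleGraph.fromEdgeSet_adj _).mpr ⟨hF, hne⟩
      rcases ih with h1 | h2 | h3
      · exact Or.inl (hadj'.reachable.trans h1)
      · exact Or.inr (Or.inl (hadj'.reachable.trans h2))
      · exact Or.inr (Or.inr (hadj'.reachable.trans h3))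

open SimpleGraph in
private lemma walk_first {V : Type*} {G' : SimpleGraph V} (pred : V → Prop) :
    ∀ {u v : V} (P : G'.Walk u v), pred v →
    ∃ (q : V) (Q : G'.Walk u q), pred q ∧ (∀ x ∈ Q.support, x ∈ P.support) ∧
      (∀ x ∈ Q.support, x ≠ q → ¬ pred x) ∧ (P.IsPath → Q.IsPath) := by
  intro u v P
  induction P with
  | nil =>
    intro hv
    refine ⟨_, SimpleGraph.Walk.nil, hv, fun x hx => hx, ?_, fun h => h⟩
    intro x hx hne
    simp only [SimpleGraph.Walk.support_nil, List.mem_singleton] at hx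
    exact absurd hx hne
  | @cons u' w' v' h P ih =>
    intro hv
    by_cases hu : pred u'
    · refine ⟨u', SimpleGraph.Walk.nil, hu, ?_, ?_, fun _ => SimpleGraph.Walk.IsPath.nil⟩
      · intro x hx
        simp only [SimpleGraph.Walk.support_nil, List.mem_singleton] at hx
        subst hx
        exact SimpleGraph.Walk.start_mem_support _
      · intro x hx hne
        simp only [SimpleGraph.Walk.support_nil, List.mem_singleton] at hx
        exact absurd hx hne
    · obtain ⟨q, Q, hq, hsup, hnp, hpath⟩ := ih hv
      refine ⟨q, SimpleGraph.Walk.cons h Q, hq, ?_, ?_, ?_⟩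
      · intro x hx
        rw [SimpleGraph.Walk.support_cons, List.mem_cons] at hx ⊢
        rcases hx with rfl | hx
        · exact Or.inl rfl
        · exact Or.inr (hsup x hx)
      · intro x hx hne
        rw [SimpleGraph.Walk.support_cons, List.mem_cons] at hx
        rcases hx with rfl | hx
        · exact hu
        · exact hnp x hx hne
      · intro hP
        rw [SimpleGraph.Walk.cons_isPath_iff] at hP ⊢
        exact ⟨hpath hP.1, fun hmem => hP.2 (hsup _ hmem)⟩

theorem stmt15 {V : Type*} (G : SimpleGraph V) (W : Set V) (T : Set (Sym2 V))
    (hT : IsSteiner G W T) (hmin : ∀ T' ⊂ T, ¬ IsSteiner G W T')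
    (a b : V) (he : s(a, b) ∈ T)
    (Y : Set (Sym2 V)) (hYG : Y ⊆ G.edgeSet \ {s(a, b)})
    (hYS : IsSteiner G W ((T \ {s(a, b)}) ∪ Y))
    (hYmin : ∀ Y' ⊂ Y, ¬ IsSteiner G W ((T \ {s(a, b)}) ∪ Y')) :
    ∃ p q : V, ∃ P : G.Walk p q, P.IsPath ∧ s(a, b) ∉ P.edges ∧
      Y = {f : Sym2 V | f ∈ P.edges} ∧
      -- the endpoints lie in the components C₁ of a and C₂ of b
      (SimpleGraph.fromEdgeSet (T \ {s(a, b)})).Reachable p a ∧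
      (SimpleGraph.fromEdgeSet (T \ {s(a, b)})).Reachable q b ∧
      -- internal vertices lie outside V(C₁) ∪ V(C₂)
      ∀ x ∈ P.support, x ≠ p → x ≠ q →
        ¬ (SimpleGraph.fromEdgeSet (T \ {s(a, b)})).Reachable x a ∧
        ¬ (SimpleGraph.fromEdgeSet (T \ {s(a, b)})).Reachable x b := by
  classical
  open SimpleGraph in
  set F : Set (Sym2 V) := T \ {s(a, b)} with hF_def
  set N := SimpleGraph.fromEdgeSet F with hN_def
  have hTsub : T ⊆ G.edgeSet := hT.1
  have hTins : insert s(a, b) F = T := by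
    rw [hF_def, Set.insert_diff_singleton, Set.insert_eq_self.mpr he]
  -- reachability in T splits
  have split : ∀ {u v : V}, (SimpleGraph.fromEdgeSet T).Reachable u v →
      N.Reachable u a ∨ N.Reachable u b ∨ N.Reachable u v := by
    intro u v h
    obtain ⟨p⟩ := h
    rw [← hTins] at p
    exact walk_split p
  have hFT : F ⊂ T := by
    refine ⟨Set.diff_subset, fun hsub => ?_⟩
    have := hsub he
    rw [hF_def] at this
    exact this.2 rfl
  have hnot : ¬ IsSteiner G W F := hmin F hFT
  have hFsubG : F ⊆ G.edgeSet := fun g hg => hTsub hg.1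
  obtain ⟨w1, hw1, w2, hw2, h12⟩ : ∃ w1 ∈ W, ∃ w2 ∈ W, ¬ N.Reachable w1 w2 := by
    by_contra hc
    push_neg at hc
    exact hnot ⟨hFsubG, hc⟩
  have h1' : N.Reachable w1 a ∨ N.Reachable w1 b := by
    rcases split (hT.2 w1 hw1 w2 hw2) with h | h | h
    exacts [Or.inl h, Or.inr h, absurd h h12]
  have h2' : N.Reachable w2 a ∨ N.Reachable w2 b := by
    rcases split (hT.2 w2 hw2 w1 hw1) with h | h | h
    exacts [Or.inl h, Or.inr h, absurd h.symm h12]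
  obtain ⟨wa, hwa, wb, hwb, hwaa, hwbb, hab'⟩ :
      ∃ wa ∈ W, ∃ wb ∈ W, N.Reachable wa a ∧ N.Reachable wb b ∧ ¬ N.Reachable wa wb := by
    rcases h1' with ha1 | hb1 <;> rcases h2' with ha2 | hb2
    · exact absurd (ha1.trans ha2.symm) h12
    · exact ⟨w1, hw1, w2, hw2, ha1, hb2, h12⟩
    · exact ⟨w2, hw2, w1, hw1, ha2, hb1, fun h => h12 h.symm⟩
    · exact absurd (hb1.trans hb2.symm) h12
  have hab : ¬ N.Reachable a b := fun h => hab' (hwaa.trans (h.trans hwbb.symm))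
  have hterm : ∀ w ∈ W, N.Reachable w a ∨ N.Reachable w b := by
    intro w hw
    rcases split (hT.2 w hw wa hwa) with h | h | h
    exacts [Or.inl h, Or.inr h, Or.inl (h.trans hwaa)]
  -- every endpoint of an edge of T is reachable to wa in T
  have hS : ∀ x y : V, s(x, y) ∈ T → (SimpleGraph.fromEdgeSet T).Reachable x wa := by
    have hSsub : {g | g ∈ T ∧ ∀ x y : V, g = s(x, y) →
        (SimpleGraph.fromEdgeSet T).Reachable x wa} ⊆ T := fun g hg => hg.1
    have hSSteiner : IsSteiner G W {g | g ∈ T ∧ ∀ x y : V, g = s(x, y) →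
        (SimpleGraph.fromEdgeSet T).Reachable x wa} := by
      refine ⟨hSsub.trans hTsub, ?_⟩
      have key : ∀ w ∈ W, (SimpleGraph.fromEdgeSet {g | g ∈ T ∧ ∀ x y : V, g = s(x, y) →
          (SimpleGraph.fromEdgeSet T).Reachable x wa}).Reachable w wa := by
        intro w hw
        obtain ⟨P⟩ := hT.2 w hw wa hwa
        refine ⟨P.transfer _ ?_⟩
        intro g hg
        have hgT : g ∈ (SimpleGraph.fromEdgeSet T).edgeSet := P.edges_subset_edgeSet hg
        rw [SimpleGraph.edgeSet_fromEdgeSet] at hgT ⊢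
        refine ⟨⟨hgT.1, ?_⟩, hgT.2⟩
        intro x y hxy
        subst hxy
        exact ⟨P.dropUntil x (SimpleGraph.Walk.fst_mem_support_of_mem_edges P hg)⟩
      intro w hw w' hw'
      exact (key w hw).trans (key w' hw').symm
    have hST : {g | g ∈ T ∧ ∀ x y : V, g = s(x, y) →
        (SimpleGraph.fromEdgeSet T).Reachable x wa} = T := by
      by_contra hne
      exact hmin _ ⟨hSsub, fun h => hne (Set.Subset.antisymm hSsub h)⟩ hSSteiner
    intro x y hxy
    have hmem : s(x, y) ∈ {g | g ∈ T ∧ ∀ x y : V, g = s(x, y) →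
        (SimpleGraph.fromEdgeSet T).Reachable x wa} := by rw [hST]; exact hxy
    exact hmem.2 x y rfl
  have hEP : ∀ x y : V, s(x, y) ∈ T → N.Reachable x a ∨ N.Reachable x b := by
    intro x y hxy
    rcases split (hS x y hxy) with h | h | h
    exacts [Or.inl h, Or.inr h, Or.inl (h.trans hwaa)]
  -- H
  set H := SimpleGraph.fromEdgeSet (F ∪ Y) with hH_def
  have hNH : N ≤ H := SimpleGraph.fromEdgeSet_mono Set.subset_union_left
  have haHb : H.Reachable a b :=
    ((hwaa.symm.mono hNH).trans (hYS.2 wa hwa wb hwb)).trans (hwbb.mono hNH)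
  obtain ⟨W0⟩ := haHb
  obtain ⟨q, Q1, hqB, hsup1, hnotB, hpath1⟩ :=
    walk_first (fun x => N.Reachable x b) W0.toPath.1 (SimpleGraph.Reachable.refl b)
  obtain ⟨p, Q2, hpA, hsup2, hnotA, hpath2⟩ :=
    walk_first (fun x => N.Reachable x a) Q1.reverse (SimpleGraph.Reachable.refl a)
  set P := Q2.reverse with hP_def
  have hPpath : P.IsPath := (hpath2 (hpath1 W0.toPath.2).reverse).reverse
  have hmemP : ∀ x, x ∈ P.support ↔ x ∈ Q2.support := by
    intro x
    rw [hP_def, SimpleGraph.Walk.support_reverse, List.mem_reverse]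
  have Qa : ∀ x ∈ P.support, x ≠ p → ¬ N.Reachable x a := by
    intro x hx hne
    exact hnotA x ((hmemP x).mp hx) hne
  have Qb : ∀ x ∈ P.support, x ≠ q → ¬ N.Reachable x b := by
    intro x hx hne
    have hx2 : x ∈ Q1.reverse.support := hsup2 x ((hmemP x).mp hx)
    rw [SimpleGraph.Walk.support_reverse, List.mem_reverse] at hx2
    exact hnotB x hx2 hne
  have hPedgesH : ∀ f ∈ P.edges, f ∈ F ∪ Y ∧ ¬ f.IsDiag := by
    intro f hf
    have h1 := P.edges_subset_edgeSet hf
    rw [hH_def, SimpleGraph.edgeSet_fromEdgeSet] at h1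
    exact ⟨h1.1, h1.2⟩
  have hPYxy : ∀ x y : V, s(x, y) ∈ P.edges → s(x, y) ∈ Y := by
    intro x y hf
    obtain ⟨hmem, hdiag⟩ := hPedgesH _ hf
    have hxy : x ≠ y := by
      intro h
      exact hdiag (by rw [h]; exact Sym2.mk_isDiag_iff.mpr rfl)
    rcases hmem with hfF | hfY
    · exfalso
      have hx : x ∈ P.support := SimpleGraph.Walk.fst_mem_support_of_mem_edges P hf
      have hy : y ∈ P.support := SimpleGraph.Walk.snd_mem_support_of_mem_edges P hf
      have hxab := hEP x y hfF.1
      have hyab := hEP y x (by rw [Sym2.eq_swap]; exact hfF.1)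
      have hNadj : N.Adj x y := (SimpleGraph.fromEdgeSet_adj _).mpr ⟨hfF, hxy⟩
      have hpos : ∀ z ∈ P.support, N.Reachable z a ∨ N.Reachable z b →
          (z = p ∧ N.Reachable z a) ∨ (z = q ∧ N.Reachable z b) := by
        intro z hz hzab
        rcases hzab with h | h
        · exact Or.inl ⟨by by_contra hne; exact Qa z hz hne h, h⟩
        · exact Or.inr ⟨by by_contra hne; exact Qb z hz hne h, h⟩
      rcases hpos x hx hxab with ⟨rfl, hxa⟩ | ⟨rfl, hxb⟩ <;>
        rcases hpos y hy hyab with ⟨rfl, hya⟩ | ⟨rfl, hyb⟩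
      · exact hxy rfl
      · exact hab (hxa.symm.trans (hNadj.reachable.trans hyb))
      · exact hab (hya.symm.trans (hNadj.symm.reachable.trans hxb))
      · exact hxy rfl
    · exact hfY
  have hPYset : {f : Sym2 V | f ∈ P.edges} ⊆ Y := by
    intro f hf
    induction f using Sym2.ind with
    | _ x y => exact hPYxy x y hf
  have hsetY' : IsSteiner G W (F ∪ {f : Sym2 V | f ∈ P.edges}) := by
    constructor
    · intro g hg
      rcases hg with h | h
      · exact hFsubG h
      · exact (hYG (hPYset h)).1
    · set M := SimpleGraph.fromEdgeSet (F ∪ {f : Sym2 V | f ∈ P.edges}) with hM_def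
      have hNM : N ≤ M := SimpleGraph.fromEdgeSet_mono Set.subset_union_left
      have hpq : M.Reachable p q := by
        refine ⟨P.transfer M ?_⟩
        intro g hg
        rw [hM_def, SimpleGraph.edgeSet_fromEdgeSet]
        exact ⟨Or.inr hg, (hPedgesH g hg).2⟩
      have haMb : M.Reachable a b := ((hpA.mono hNM).symm.trans hpq).trans (hqB.mono hNM)
      intro w hw w' hw'
      have hW : ∀ z ∈ W, M.Reachable z a := by
        intro z hz
        rcases hterm z hz with h | h
        · exact h.mono hNM
        · exact (h.mono hNM).trans haMb.symm
      exact (hW w hw).trans (hW w' hw').symm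
  have hYeq : Y = {f : Sym2 V | f ∈ P.edges} := by
    by_contra hne
    exact hYmin _ ⟨hPYset, fun h => hne (Set.Subset.antisymm h hPYset)⟩ hsetY'
  have hedgeG : ∀ g ∈ P.edges, g ∈ G.edgeSet := fun g hg => (hYG (hPYset hg)).1
  refine ⟨p, q, P.transfer G hedgeG, hPpath.transfer hedgeG, ?_, ?_, hpA, hqB, ?_⟩
  · rw [SimpleGraph.Walk.edges_transfer]
    intro hmem
    exact (hYG (hPYset hmem)).2 rfl
  · rw [hYeq]
    ext f
    simp only [Set.mem_setOf_eq, SimpleGraph.Walk.edges_transfer]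
  · intro x hx hxp hxq
    rw [SimpleGraph.Walk.support_transfer] at hx
    exact ⟨Qa x hx hxp, Qb x hx hxq⟩
end

section
/- Let Π be a monotone property on a finite set U and suppose the supergraph algorithm is run from a seed minimal Π-set S: maintain a set 𝒪 of generated minimal Π-sets, initially {S}; repeatedly, for X ∈ 𝒪, x ∈ X, and each minimal Y ⊆ U \ {x} with |Y| ≤ k such that (X \ {x}) ∪ Y is a Π-set, add to 𝒪 some minimal Π-set X' ⊆ (X \ {x}) ∪ Y provided |X'| < |S| + k. Then when the algorithm terminates, 𝒪 contains every minimal Π-set Z of U with |Z| ≤ k, and every member of 𝒪 has cardinality less than |S| + k. -/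
/-!
Suppose a minimal Π-set `Z` with `|Z| ≤ k` were not generated, and pick a generated `X` minimising
`|X ∪ Z|`, so `|X ∪ Z| ≤ |S ∪ Z| ≤ |S| + k`. Since `Z` is minimal, `X ⊄ Z`; take `x ∈ X \ Z`.
As `(X \ {x}) ∪ Z` is a Π-set, some minimal `Y ⊆ Z` makes `(X \ {x}) ∪ Y` a Π-set, and the
minimal Π-set `W ⊆ (X \ {x}) ∪ Y` chosen by the algorithm satisfies `x ∉ W ∪ Z ⊆ X ∪ Z`.
Hence `|W| ≤ |W ∪ Z| < |X ∪ Z| ≤ |S| + k`, so `W` is generated, contradicting the choice of `X`.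
-/

namespace Finset

theorem exists_subset_forall_ssubset_not {α : Type*} {Q : Finset α → Prop} {Z : Finset α}
    (hZ : Q Z) :
    ∃ Y ⊆ Z, Q Y ∧ ∀ Y' ⊂ Y, ¬ Q Y' := by
  obtain ⟨Y, hYZ, hY⟩ := exists_minimal_le_of_wellFoundedLT Q Z hZ
  exact ⟨Y, hYZ, minimal_iff_forall_lt.mp hY⟩

variable {α : Type*} [DecidableEq α]

theorem card_union_lt_of_subset_erase_union {W X Z : Finset α} {x : α}
    (hW : W ⊆ X.erase x ∪ Z) (hxX : x ∈ X) (hxZ : x ∉ Z) :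
    (W ∪ Z).card < (X ∪ Z).card := by
  have hsub : W ∪ Z ⊆ (X ∪ Z).erase x := by
    rw [erase_union_distrib, erase_eq_of_notMem hxZ]
    exact union_subset hW subset_union_right
  exact (card_le_card hsub).trans_lt (card_erase_lt_of_mem (mem_union_left Z hxX))

end Finset

open Finset

section SupergraphEnumeration

variable {α : Type*} [DecidableEq α]

theorem exists_mem_card_union_lt {U : Finset α} {P : Finset α → Prop} {k N : ℕ}
    (hmono : ∀ X Y : Finset α, X ⊆ Y → Y ⊆ U → P X → P Y)
    {comp : Finset α → Finset α}
    (hcomp : ∀ A : Finset α, A ⊆ U → P A →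
      comp A ⊆ A ∧ P (comp A) ∧ ∀ T ⊂ comp A, ¬ P T)
    {O : Finset (Finset α)} (hOU : ∀ X ∈ O, X ⊆ U)
    (hclosed : ∀ X ∈ O, ∀ x ∈ X, ∀ Y : Finset α, Y ⊆ U.erase x → Y.card ≤ k →
      P (X.erase x ∪ Y) → (∀ Y' ⊂ Y, ¬ P (X.erase x ∪ Y')) →
      (comp (X.erase x ∪ Y)).card < N → comp (X.erase x ∪ Y) ∈ O)
    {Z : Finset α} (hZU : Z ⊆ U) (hZP : P Z) (hZk : Z.card ≤ k)
    {X : Finset α} (hX : X ∈ O) (hXZ : (X ∪ Z).card ≤ N) {x : α} (hxX : x ∈ X) (hxZ : x ∉ Z) :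
    ∃ W ∈ O, (W ∪ Z).card < (X ∪ Z).card := by
  have hXxU : X.erase x ⊆ U := (erase_subset x X).trans (hOU X hX)
  have hPXZ : P (X.erase x ∪ Z) :=
    hmono Z _ subset_union_right (union_subset hXxU hZU) hZP
  obtain ⟨Y, hYZ, hYP, hYmin⟩ :=
    exists_subset_forall_ssubset_not (Q := fun Y => P (X.erase x ∪ Y)) hPXZ
  have hYU : Y ⊆ U.erase x := fun a ha =>
    mem_erase.mpr ⟨fun hax => hxZ (hax ▸ hYZ ha), hZU (hYZ ha)⟩
  obtain ⟨hWA, -, -⟩ := hcomp _ (union_subset hXxU (hYZ.trans hZU)) hYP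
  have hlt : (comp (X.erase x ∪ Y) ∪ Z).card < (X ∪ Z).card :=
    card_union_lt_of_subset_erase_union (hWA.trans (union_subset_union_right hYZ)) hxX hxZ
  have hWN : (comp (X.erase x ∪ Y)).card < N :=
    ((card_le_card subset_union_left).trans_lt hlt).trans_le hXZ
  exact ⟨_, hclosed X hX x hxX Y hYU ((card_le_card hYZ).trans hZk) hYP hYmin hWN, hlt⟩

theorem mem_of_card_union_le {U : Finset α} {P : Finset α → Prop} {k N : ℕ}
    (hmono : ∀ X Y : Finset α, X ⊆ Y → Y ⊆ U → P X → P Y)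
    {comp : Finset α → Finset α}
    (hcomp : ∀ A : Finset α, A ⊆ U → P A →
      comp A ⊆ A ∧ P (comp A) ∧ ∀ T ⊂ comp A, ¬ P T)
    {O : Finset (Finset α)} (hOmem : ∀ X ∈ O, X ⊆ U ∧ P X)
    (hclosed : ∀ X ∈ O, ∀ x ∈ X, ∀ Y : Finset α, Y ⊆ U.erase x → Y.card ≤ k →
      P (X.erase x ∪ Y) → (∀ Y' ⊂ Y, ¬ P (X.erase x ∪ Y')) →
      (comp (X.erase x ∪ Y)).card < N → comp (X.erase x ∪ Y) ∈ O)
    {Z : Finset α} (hZU : Z ⊆ U) (hZP : P Z) (hZmin : ∀ T ⊂ Z, ¬ P T) (hZk : Z.card ≤ k)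
    {X : Finset α} (hX : X ∈ O) (hXZ : (X ∪ Z).card ≤ N) : Z ∈ O := by
  induction hn : (X ∪ Z).card using Nat.strong_induction_on generalizing X with
  | _ n ih =>
    by_cases hsub : X ⊆ Z
    · rcases hsub.eq_or_ssubset with rfl | hssub
      · exact hX
      · exact absurd (hOmem X hX).2 (hZmin X hssub)
    obtain ⟨x, hxX, hxZ⟩ := not_subset.mp hsub
    obtain ⟨W, hW, hlt⟩ := exists_mem_card_union_lt hmono hcomp (fun X hX => (hOmem X hX).1)
      hclosed hZU hZP hZk hX hXZ hxX hxZ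
    exact ih _ (hn ▸ hlt) hW (hlt.le.trans hXZ) rfl

end SupergraphEnumeration

theorem stmt17_general {α : Type*} [DecidableEq α] (U : Finset α) (P : Finset α → Prop)
    (k : ℕ) (hk : 1 ≤ k)
    (hmono : ∀ X Y : Finset α, X ⊆ Y → Y ⊆ U → P X → P Y)
    (comp : Finset α → Finset α)
    (hcomp : ∀ A : Finset α, A ⊆ U → P A →
      comp A ⊆ A ∧ P (comp A) ∧ ∀ T ⊂ comp A, ¬ P T)
    (S : Finset α)
    (O : Finset (Finset α)) (hSO : S ∈ O)
    (hOmem : ∀ X ∈ O, X ⊆ U ∧ P X ∧ (∀ T ⊂ X, ¬ P T) ∧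
      (X = S ∨ X.card < S.card + k))
    (hclosed : ∀ X ∈ O, ∀ x ∈ X, ∀ Y : Finset α, Y ⊆ U.erase x → Y.card ≤ k →
      P (X.erase x ∪ Y) → (∀ Y' ⊂ Y, ¬ P (X.erase x ∪ Y')) →
      (comp (X.erase x ∪ Y)).card < S.card + k → comp (X.erase x ∪ Y) ∈ O) :
    (∀ Z : Finset α, Z ⊆ U → P Z → (∀ T ⊂ Z, ¬ P T) → Z.card ≤ k → Z ∈ O) ∧
    (∀ X ∈ O, X.card < S.card + k) := by
  refine ⟨fun Z hZU hZP hZmin hZk => ?_, fun X hX => ?_⟩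
  · have hSZ : (S ∪ Z).card ≤ S.card + k :=
      (card_union_le S Z).trans (Nat.add_le_add_left hZk _)
    exact mem_of_card_union_le hmono hcomp (fun X hX => ⟨(hOmem X hX).1, (hOmem X hX).2.1⟩)
      hclosed hZU hZP hZmin hZk hSO hSZ
  · rcases (hOmem X hX).2.2.2 with rfl | hlt
    · omega
    · exact hlt

theorem stmt17 {α : Type*} [DecidableEq α] (U : Finset α) (P : Finset α → Prop)
    (k : ℕ) (hk : 1 ≤ k)
    (hmono : ∀ X Y : Finset α, X ⊆ Y → Y ⊆ U → P X → P Y)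
    (comp : Finset α → Finset α)
    (hcomp : ∀ A : Finset α, A ⊆ U → P A →
      comp A ⊆ A ∧ P (comp A) ∧ ∀ T ⊂ comp A, ¬ P T)
    (S : Finset α) (hSU : S ⊆ U) (hSP : P S) (hSmin : ∀ T ⊂ S, ¬ P T)
    (O : Finset (Finset α)) (hSO : S ∈ O)
    (hOmem : ∀ X ∈ O, X ⊆ U ∧ P X ∧ (∀ T ⊂ X, ¬ P T) ∧
      (X = S ∨ X.card < S.card + k))
    (hclosed : ∀ X ∈ O, ∀ x ∈ X, ∀ Y : Finset α, Y ⊆ U.erase x → Y.card ≤ k →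
      P (X.erase x ∪ Y) → (∀ Y' ⊂ Y, ¬ P (X.erase x ∪ Y')) →
      (comp (X.erase x ∪ Y)).card < S.card + k → comp (X.erase x ∪ Y) ∈ O) :
    (∀ Z : Finset α, Z ⊆ U → P Z → (∀ T ⊂ Z, ¬ P T) → Z.card ≤ k → Z ∈ O) ∧
    (∀ X ∈ O, X.card < S.card + k) :=
  stmt17_general U P k hk hmono comp hcomp S O hSO hOmem hclosed
end
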